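/- arXiv:2203.03327 — 2 statements merged into one kernel-verified Lean document; each statement's English description precedes it below -/
import Mathlib

section
/- Let n > 3f and let x, y : Fin n → ℝ be two vectors that agree on at least n − f coordinates, and suppose all entries of both vectors lie in an interval [a,b]. Define FTA(v) = mean(select_f(reduce_f(v))), where reduce_f discards the f largest and f smallest entries and select_f keeps every f-th element of the remaining sorted list. Then |FTA(x) − FTA(y)| ≤ (b − a)/c, where c = ⌊(n − 2f − 1)/f⌋ + 1. -/
/-!
Write `σ_k(v)` for the `k`-th smallest entry of `v`. If `x` and `y` differ in at most `f`
coordinates, then `σ_j(y) ≤ σ_{j+f}(x)`: of the `j + f + 1` entries of `x` that are at most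
`σ_{j+f}(x)`, at least `j + 1` are also entries of `y`. `FTA` averages `σ_f, σ_{2f}, …, σ_{cf}`, so these
statistics of `x` and `y` interleave, `σ_{jf}(x) ≤ σ_{(j+1)f}(y)`, and the difference of the two
sums telescopes to at most `σ_{cf}(x) - σ_f(y) ≤ b - a`.
-/

/-- The entries of `v` in nondecreasing order. -/
noncomputable def sortedOf (n : ℕ) (v : Fin n → ℝ) : List ℝ :=
  (List.ofFn v).mergeSort (· ≤ ·)

/-- `reduce_f`: discard the `f` smallest and `f` largest entries of the sorted list. -/
def reduceF (f : ℕ) (l : List ℝ) : List ℝ :=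
  (l.drop f).take (l.length - 2 * f)

/-- `select_f`: keep every `f`-th element of the (sorted) list. -/
def selectF (f : ℕ) (l : List ℝ) : List ℝ :=
  (List.range ((l.length - 1) / f + 1)).map fun j => l.getD (j * f) 0

/-- The fault-tolerant averaging function `FTA(v) = mean(select_f(reduce_f(v)))`. -/
noncomputable def FTA (n f : ℕ) (v : Fin n → ℝ) : ℝ :=
  let l := selectF f (reduceF f (sortedOf n v))
  l.sum / l.length

open Finset

namespace List.SortedLE

variable {α : Type*} [LinearOrder α] {L : List α} {k : ℕ}

theorem succ_le_countP_le_getElem (hL : L.SortedLE) (hk : k < L.length) :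
    k + 1 ≤ L.countP (· ≤ L[k]) := by
  have hprefix : (L.take (k + 1)).countP (· ≤ L[k]) = k + 1 := by
    rw [List.countP_eq_length.mpr, List.length_take_of_le hk]
    intro a ha
    obtain ⟨i, hi, rfl⟩ := List.mem_iff_getElem.mp ha
    rw [List.length_take] at hi
    simpa using hL.getElem_le_getElem_of_le (by omega : i ≤ k)
  exact hprefix ▸ (List.take_sublist _ _).countP_le

theorem getElem_le_of_succ_le_countP (hL : L.SortedLE) (hk : k < L.length) {t : α}
    (h : k + 1 ≤ L.countP (· ≤ t)) : L[k] ≤ t := by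
  by_contra! hlt
  have hsuffix : (L.drop k).countP (· ≤ t) = 0 := by
    rw [List.countP_eq_zero]
    intro a ha
    obtain ⟨i, hi, rfl⟩ := List.mem_iff_getElem.mp ha
    rw [List.length_drop] at hi
    simpa using hlt.trans_le (hL.getElem_le_getElem_of_le (by omega : k ≤ k + i))
  have hprefix : (L.take k).countP (· ≤ t) ≤ k :=
    List.countP_le_length.trans (List.length_take_le _ _)
  rw [← List.take_append_drop k L, List.countP_append, hsuffix] at h
  omega

end List.SortedLE

theorem List.sum_map_range {M : Type*} [AddCommMonoid M] (c : ℕ) (g : ℕ → M) :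
    ((List.range c).map g).sum = ∑ j ∈ Finset.range c, g j := by
  rw [Finset.sum_eq_multiset_sum, Finset.range_val, Multiset.range, Multiset.map_coe,
    Multiset.sum_coe]

theorem length_reduceF (f : ℕ) (L : List ℝ) : (reduceF f L).length = L.length - 2 * f := by
  rw [reduceF, List.length_take, List.length_drop]
  omega

theorem getD_reduceF (f : ℕ) (L : List ℝ) {k : ℕ} (hk : k < L.length - 2 * f) :
    (reduceF f L).getD k 0 = L.getD (f + k) 0 := by
  rw [List.getD_eq_getElem _ _ (by rwa [length_reduceF]),
    List.getD_eq_getElem _ _ (by omega)]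
  simp only [reduceF, List.getElem_take, List.getElem_drop]

theorem selectF_reduceF (f : ℕ) (L : List ℝ) (hL : 2 * f < L.length) :
    selectF f (reduceF f L) =
      (List.range ((L.length - 2 * f - 1) / f + 1)).map fun j => L.getD (f + j * f) 0 := by
  rw [selectF, length_reduceF]
  refine List.map_congr_left fun j hj => getD_reduceF f L ?_
  have hj : j * f ≤ (L.length - 2 * f - 1) / f * f :=
    Nat.mul_le_mul_right f (Nat.lt_succ_iff.mp (List.mem_range.mp hj))
  have := Nat.div_mul_le_self (L.length - 2 * f - 1) f
  omega

theorem Finset.sum_range_succ_sub_sum_le {M : Type*} [AddCommGroup M] [PartialOrder M]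
    [IsOrderedAddMonoid M] (c : ℕ) {u w : ℕ → M} (huw : ∀ j < c, u j ≤ w (j + 1)) :
    ∑ j ∈ range (c + 1), u j - ∑ j ∈ range (c + 1), w j ≤ u c - w 0 := by
  have hinterleave : ∑ j ∈ range c, u j ≤ ∑ j ∈ range c, w (j + 1) :=
    sum_le_sum fun j hj => huw j (mem_range.mp hj)
  rw [sum_range_succ, sum_range_succ']
  calc ∑ j ∈ range c, u j + u c - (∑ j ∈ range c, w (j + 1) + w 0)
      = (∑ j ∈ range c, u j - ∑ j ∈ range c, w (j + 1)) + (u c - w 0) := by abel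
    _ ≤ 0 + (u c - w 0) := by gcongr; exact sub_nonpos.mpr hinterleave
    _ = u c - w 0 := zero_add _

/-- The `k`-th smallest entry of `v`, counting from `0`; junk value `0` for `k ≥ n`. -/
noncomputable def orderStat (n : ℕ) (v : Fin n → ℝ) (k : ℕ) : ℝ :=
  (sortedOf n v).getD k 0

section OrderStatistics

variable {n : ℕ} (v : Fin n → ℝ)

theorem sortedLE_sortedOf : (sortedOf n v).SortedLE := List.sortedLE_mergeSort

theorem length_sortedOf : (sortedOf n v).length = n := by
  rw [sortedOf, List.length_mergeSort, List.length_ofFn]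

theorem card_filter_le_eq_countP_sortedOf (t : ℝ) :
    #{i | v i ≤ t} = (sortedOf n v).countP (· ≤ t) := by
  rw [sortedOf, (List.mergeSort_perm _ _).countP_eq, ← Multiset.coe_countP, ← Fin.univ_val_map,
    Multiset.countP_map, card_def, filter_val]

theorem orderStat_eq_getElem {k : ℕ} (hk : k < n) :
    orderStat n v k = (sortedOf n v)[k]'(by rwa [length_sortedOf]) :=
  List.getD_eq_getElem _ _ _

theorem succ_le_card_filter_le_orderStat {k : ℕ} (hk : k < n) :
    k + 1 ≤ #{i | v i ≤ orderStat n v k} := by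
  rw [card_filter_le_eq_countP_sortedOf, orderStat_eq_getElem v hk]
  exact (sortedLE_sortedOf v).succ_le_countP_le_getElem _

theorem orderStat_le_of_succ_le_card_filter {k : ℕ} (hk : k < n) {t : ℝ}
    (h : k + 1 ≤ #{i | v i ≤ t}) : orderStat n v k ≤ t := by
  rw [card_filter_le_eq_countP_sortedOf] at h
  rw [orderStat_eq_getElem v hk]
  exact (sortedLE_sortedOf v).getElem_le_of_succ_le_countP _ h

theorem orderStat_mem_Icc {a b : ℝ} (hv : ∀ i, v i ∈ Set.Icc a b) {k : ℕ} (hk : k < n) :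
    orderStat n v k ∈ Set.Icc a b := by
  rw [orderStat_eq_getElem v hk]
  obtain ⟨i, hi⟩ := List.mem_ofFn.mp ((List.mergeSort_perm _ _).mem_iff.mp (List.getElem_mem _))
  exact hi ▸ hv i

end OrderStatistics

theorem orderStat_le_orderStat_add {n f : ℕ} {x y : Fin n → ℝ} {I : Finset (Fin n)}
    (hI : n - f ≤ #I) (hxy : ∀ i ∈ I, x i = y i) {j : ℕ} (hj : j + f < n) :
    orderStat n y j ≤ orderStat n x (j + f) := by
  set t := orderStat n x (j + f)
  set S : Finset (Fin n) := {i | x i ≤ t}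
  have hS : j + f + 1 ≤ #S := succ_le_card_filter_le_orderStat x hj
  -- Of the `j + f + 1` entries of `x` below `t`, at least `j + 1` lie in `I`, where `y = x`.
  have hagree : S ∩ I ⊆ ({i | y i ≤ t} : Finset (Fin n)) := fun i hi => by
    rw [mem_inter, mem_filter] at hi
    simpa [← hxy i hi.2] using hi.1.2
  have hunion : #(S ∪ I) ≤ n := (card_le_univ _).trans_eq (Fintype.card_fin n)
  have hinter := card_union_add_card_inter S I
  refine orderStat_le_of_succ_le_card_filter y (by omega) ?_
  have := card_le_card hagree
  omega

theorem FTA_eq_sum_orderStat (n f : ℕ) (hn : 2 * f < n) (v : Fin n → ℝ) :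
    FTA n f v = (∑ j ∈ range ((n - 2 * f - 1) / f + 1), orderStat n v (f + j * f)) /
      (((n - 2 * f - 1) / f + 1 : ℕ) : ℝ) := by
  have hsel := selectF_reduceF f (sortedOf n v) (by rwa [length_sortedOf])
  rw [length_sortedOf] at hsel
  simp only [FTA, hsel, List.sum_map_range, List.length_map, List.length_range, orderStat]

theorem sum_orderStat_sub_le {n f : ℕ} (hn : 2 * f < n) {x y : Fin n → ℝ} {I : Finset (Fin n)}
    (hI : n - f ≤ #I) (hxy : ∀ i ∈ I, x i = y i) {a b : ℝ}
    (hx : ∀ i, x i ∈ Set.Icc a b) (hy : ∀ i, y i ∈ Set.Icc a b) :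
    ∑ j ∈ range ((n - 2 * f - 1) / f + 1), orderStat n x (f + j * f) -
      ∑ j ∈ range ((n - 2 * f - 1) / f + 1), orderStat n y (f + j * f) ≤ b - a := by
  set c := (n - 2 * f - 1) / f
  have hcf : c * f ≤ n - 2 * f - 1 := Nat.div_mul_le_self _ _
  have hindex : ∀ j ≤ c, f + j * f < n := fun j hj => by
    have := Nat.mul_le_mul_right f hj
    omega
  have hinterleave : ∀ j < c, orderStat n x (f + j * f) ≤ orderStat n y (f + (j + 1) * f) :=
    fun j hj => by
      rw [add_one_mul, ← add_assoc]
      exact orderStat_le_orderStat_add hI (fun i hi => (hxy i hi).symm)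
        (lt_of_eq_of_lt (by ring) (hindex (j + 1) hj))
  calc _ ≤ orderStat n x (f + c * f) - orderStat n y (f + 0 * f) :=
        sum_range_succ_sub_sum_le c hinterleave
    _ ≤ b - a := sub_le_sub (orderStat_mem_Icc x hx (hindex c le_rfl)).2
        (orderStat_mem_Icc y hy (hindex 0 (Nat.zero_le _))).1

theorem FTA_contraction_general (n f : ℕ) (hn : n > 3 * f)
    (x y : Fin n → ℝ) (a b : ℝ)
    (hI : ∃ I : Finset (Fin n), n - f ≤ I.card ∧ ∀ i ∈ I, x i = y i)
    (hx : ∀ i, x i ∈ Set.Icc a b) (hy : ∀ i, y i ∈ Set.Icc a b) :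
    |FTA n f x - FTA n f y| ≤ (b - a) / (((n - 2 * f - 1) / f + 1 : ℕ) : ℝ) := by
  obtain ⟨I, hIcard, hxy⟩ := hI
  have hn' : 2 * f < n := by omega
  rw [FTA_eq_sum_orderStat n f hn' x, FTA_eq_sum_orderStat n f hn' y, ← sub_div, abs_div,
    Nat.abs_cast]
  gcongr
  exact abs_sub_le_iff.mpr ⟨sum_orderStat_sub_le hn' hIcard hxy hx hy,
    sum_orderStat_sub_le hn' hIcard (fun i hi => (hxy i hi).symm) hy hx⟩

/-- Convergence property of the fault-tolerant averaging function: if `n > 3f`,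
`x` and `y` agree on at least `n - f` coordinates and all entries of both lie in
`[a, b]`, then `|FTA x - FTA y| ≤ (b-a)/c` with `c = ⌊(n-2f-1)/f⌋ + 1`. -/
theorem FTA_contraction (n f : ℕ) (hf : 1 ≤ f) (hn : n > 3 * f)
    (x y : Fin n → ℝ) (a b : ℝ)
    (hI : ∃ I : Finset (Fin n), n - f ≤ I.card ∧ ∀ i ∈ I, x i = y i)
    (hx : ∀ i, x i ∈ Set.Icc a b) (hy : ∀ i, y i ∈ Set.Icc a b) :
    |FTA n f x - FTA n f y| ≤ (b - a) / (((n - 2 * f - 1) / f + 1 : ℕ) : ℝ) :=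
  FTA_contraction_general n f hn x y a b hI hx hy
end

section
/- Let n > 3f, let I ⊆ Fin n with |I| ≥ n − f, and let v : Fin n → ℝ with v i ∈ [a,b] for all i ∈ I (entries outside I arbitrary reals). Then after removing the f largest and f smallest entries of v, all remaining entries lie in [a,b]. -/
open Finset

theorem List.countP_ofFn {α : Type*} {n : ℕ} (v : Fin n → α) (p : α → Prop)
    [DecidablePred p] :
    (List.ofFn v).countP p = #{i | p (v i)} := by
  rw [← Multiset.coe_countP, ← Fin.univ_val_map, Multiset.countP_map, card_def, filter_val]

theorem List.countP_ofFn_le_card_compl {α : Type*} {n : ℕ} (v : Fin n → α) (p : α → Prop)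
    [DecidablePred p] (I : Finset (Fin n)) (hp : ∀ i ∈ I, ¬ p (v i)) :
    (List.ofFn v).countP p ≤ #Iᶜ := by
  rw [List.countP_ofFn]
  exact card_le_card fun i hi => mem_compl.2 fun hiI =>
    hp i hiI (by simpa using (mem_filter.1 hi).2)

namespace List.SortedLE

variable {α : Type*} [Preorder α] [DecidableLT α] {l : List α}

theorem lt_countP_lt_of_mem_drop (hl : l.SortedLE) {i : ℕ} {y a : α} (hy : y ∈ l.drop i)
    (hya : y < a) : i < l.countP (fun x => decide (x < a)) := by
  have hi : i < l.length := by
    have := length_pos_of_mem hy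
    rw [length_drop] at this
    omega
  have htake : (l.take i).countP (fun x => decide (x < a)) = i := by
    rw [countP_eq_length.2 fun x hx =>
      decide_eq_true (lt_of_le_of_lt (hl.pairwise.rel_of_mem_take_of_mem_drop hx hy) hya)]
    simp only [length_take]
    omega
  have hdrop : 0 < (l.drop i).countP (fun x => decide (x < a)) :=
    countP_pos_iff.2 ⟨y, hy, decide_eq_true hya⟩
  conv_rhs => rw [← take_append_drop i l, countP_append]
  omega

theorem lt_countP_gt_of_mem_take (hl : l.SortedLE) {i : ℕ} {y b : α}
    (hy : y ∈ l.take (l.length - i)) (hby : b < y) : i < l.countP (fun x => decide (b < x)) := by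
  have hi : i < l.length := by
    have := length_pos_of_mem hy
    rw [length_take] at this
    omega
  have hdrop : (l.drop (l.length - i)).countP (fun x => decide (b < x)) = i := by
    rw [countP_eq_length.2 fun x hx =>
      decide_eq_true (lt_of_lt_of_le hby (hl.pairwise.rel_of_mem_take_of_mem_drop hy hx))]
    simp only [length_drop]
    omega
  have htake : 0 < (l.take (l.length - i)).countP (fun x => decide (b < x)) :=
    countP_pos_iff.2 ⟨y, hy, decide_eq_true hby⟩
  conv_rhs => rw [← take_append_drop (l.length - i) l, countP_append]
  omega

end List.SortedLE

theorem mem_take_of_mem_reduceF {f : ℕ} {l : List ℝ} {z : ℝ} (hz : z ∈ reduceF f l) :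
    z ∈ l.take (l.length - f) := by
  obtain h | h := le_or_gt (2 * f) l.length
  · rw [reduceF, List.take_drop] at hz
    exact List.take_subset_take_left _ (by omega) (List.drop_subset _ _ hz)
  · simp [reduceF, Nat.sub_eq_zero_of_le h.le] at hz

theorem reduceF_mem_Icc_general (n f : ℕ)
    (I : Finset (Fin n)) (hI : n - f ≤ I.card)
    (v : Fin n → ℝ) (a b : ℝ) (hv : ∀ i ∈ I, v i ∈ Set.Icc a b) :
    ∀ z ∈ reduceF f (sortedOf n v), z ∈ Set.Icc a b := by
  intro z hz
  have hsorted : (sortedOf n v).SortedLE := List.sortedLE_mergeSort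
  have hperm : (sortedOf n v).Perm (List.ofFn v) := List.mergeSort_perm _ _
  have hout : #Iᶜ ≤ f := by
    rw [card_compl, Fintype.card_fin]
    omega
  have hlow : (sortedOf n v).countP (fun x => decide (x < a)) ≤ f := by
    rw [hperm.countP_eq]
    exact (List.countP_ofFn_le_card_compl v (· < a) I fun i hi => not_lt.2 (hv i hi).1).trans hout
  have hhigh : (sortedOf n v).countP (fun x => decide (b < x)) ≤ f := by
    rw [hperm.countP_eq]
    exact (List.countP_ofFn_le_card_compl v (b < ·) I fun i hi => not_lt.2 (hv i hi).2).trans hout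
  refine ⟨not_lt.1 fun hza => ?_, not_lt.1 fun hbz => ?_⟩
  · exact (hsorted.lt_countP_lt_of_mem_drop (List.take_subset _ _ hz) hza).not_ge hlow
  · exact (hsorted.lt_countP_gt_of_mem_take (mem_take_of_mem_reduceF hz) hbz).not_ge hhigh

/-- If `n > 3f`, `|I| ≥ n - f`, and `v i ∈ [a,b]` for all `i ∈ I`, then after
removing the `f` largest and `f` smallest entries of `v`, all remaining entries
lie in `[a, b]`. -/
theorem reduceF_mem_Icc (n f : ℕ) (hn : n > 3 * f)
    (I : Finset (Fin n)) (hI : n - f ≤ I.card)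
    (v : Fin n → ℝ) (a b : ℝ) (hv : ∀ i ∈ I, v i ∈ Set.Icc a b) :
    ∀ z ∈ reduceF f (sortedOf n v), z ∈ Set.Icc a b :=
  reduceF_mem_Icc_general n f I hI v a b hv
end
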